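/- Let γ : E → ℝ be a bounded measurable function with essential sup norm at most γ_max, and let k ≥ 1 be an integer. For p, q ∈ L²(E;ℝ) set c(p,q) := ∫_E γ p q dx and c_h(p,q) := ∫_E γ (Π⁰_{k−1} p)(Π⁰_{k−1} q) dx. Then c_h(p,q) − c(p,q) ≤ ℰ_{k−1}(γ p) · ℰ_{k−1}(q) + ℰ_{k−1}(γ q) · ℰ_{k−1}(p) + γ_max · ℰ_{k−1}(p) · ℰ_{k−1}(q). -/

import Mathlib

open MeasureTheory
open scoped RealInnerProductSpace

noncomputable section

abbrev Plane := EuclideanSpace ℝ (Fin 2)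

/-- `f` is (the restriction of) a real polynomial function on `ℝ²` of total degree at most `m`. -/
def IsPolyDeg (m : ℕ) (f : Plane → ℝ) : Prop :=
  ∃ P : MvPolynomial (Fin 2) ℝ, P.totalDegree ≤ m ∧ ∀ x, f x = MvPolynomial.eval (fun i => x i) P

/-- `Pf` is the `L²(E)`-orthogonal projection of `f` onto the space of polynomial
functions of total degree `≤ m`: it is such a polynomial and the error is
`L²(E)`-orthogonal to all such polynomials. -/
def IsL2Proj (E : Set Plane) (m : ℕ) (f Pf : Plane → ℝ) : Prop :=
  IsPolyDeg m Pf ∧ ∀ g : Plane → ℝ, IsPolyDeg m g → ∫ x in E, (f x - Pf x) * g x = 0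

/-- Componentwise `L²(E)`-projection for `ℝ²`-valued functions. -/
def IsL2ProjV (E : Set Plane) (m : ℕ) (f Pf : Plane → Plane) : Prop :=
  ∀ i : Fin 2, IsL2Proj E m (fun x => f x i) (fun x => Pf x i)

/-- `ℰ_m(f) = ‖f - Π⁰_m f‖_{L²(E)}` for a scalar function, where `Pf = Π⁰_m f`. -/
def errS (E : Set Plane) (f Pf : Plane → ℝ) : ℝ :=
  Real.sqrt (∫ x in E, (f x - Pf x) ^ 2)

/-- `ℰ_m(f) = ‖f - Π⁰_m f‖_{L²(E)}` for an `ℝ²`-valued function, where `Pf = Π⁰_m f`. -/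
def errV (E : Set Plane) (f Pf : Plane → Plane) : ℝ :=
  Real.sqrt (∫ x in E, ‖f x - Pf x‖ ^ 2)

/-- `L²(E)` norm of a scalar function. -/
def l2normS (E : Set Plane) (f : Plane → ℝ) : ℝ :=
  Real.sqrt (∫ x in E, (f x) ^ 2)

/-- `L²(E)` norm of an `ℝ²`-valued function. -/
def l2normV (E : Set Plane) (f : Plane → Plane) : ℝ :=
  Real.sqrt (∫ x in E, ‖f x‖ ^ 2)

/-!
With `e_p = p - Π p` and `e_q = q - Π q` one has pointwise
`γ (Π p) (Π q) - γ p q = γ e_p e_q - (γ p) e_q - (γ q) e_p`.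
Since `e_q ⟂ Π (γ p)` and `e_p ⟂ Π (γ q)`, the last two terms integrate to
`∫ (γ p - Π (γ p)) e_q` and `∫ (γ q - Π (γ q)) e_p`, which Cauchy–Schwarz bounds by the products of
projection errors; the first term is bounded by `γmax ‖e_p‖ ‖e_q‖`.
-/

namespace MeasureTheory

variable {α : Type*} [MeasurableSpace α] {μ : Measure α} {f g : α → ℝ}

lemma MemLp.integral_mul_eq_inner (hf : MemLp f 2 μ) (hg : MemLp g 2 μ) :
    ∫ x, f x * g x ∂μ = ⟪hf.toLp f, hg.toLp g⟫ := by
  rw [L2.inner_def]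
  refine integral_congr_ae ?_
  filter_upwards [hf.coeFn_toLp, hg.coeFn_toLp] with x hfx hgx
  simp [hfx, hgx, mul_comm]

lemma MemLp.sqrt_integral_sq_eq_norm (hf : MemLp f 2 μ) :
    √(∫ x, f x ^ 2 ∂μ) = ‖hf.toLp f‖ := by
  simp_rw [sq, hf.integral_mul_eq_inner hf, real_inner_self_eq_norm_mul_norm,
    Real.sqrt_mul_self (norm_nonneg _)]

lemma MemLp.integrable_fun_mul (hf : MemLp f 2 μ) (hg : MemLp g 2 μ) :
    Integrable (fun x => f x * g x) μ :=
  hf.integrable_mul hg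

lemma abs_integral_mul_le_sqrt_mul_sqrt (hf : MemLp f 2 μ) (hg : MemLp g 2 μ) :
    |∫ x, f x * g x ∂μ| ≤ √(∫ x, f x ^ 2 ∂μ) * √(∫ x, g x ^ 2 ∂μ) := by
  rw [hf.integral_mul_eq_inner hg, hf.sqrt_integral_sq_eq_norm, hg.sqrt_integral_sq_eq_norm]
  exact abs_real_inner_le_norm _ _

lemma integral_mul_mul_le_of_abs_le {γ : α → ℝ} {C : ℝ} (hγ : AEStronglyMeasurable γ μ)
    (hγC : ∀ᵐ x ∂μ, |γ x| ≤ C) (hf : MemLp f 2 μ) (hg : MemLp g 2 μ) :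
    ∫ x, γ x * f x * g x ∂μ ≤ C * √(∫ x, f x ^ 2 ∂μ) * √(∫ x, g x ^ 2 ∂μ) := by
  rcases eq_or_ne μ 0 with rfl | hμ
  · simp
  have hC : 0 ≤ C := by
    have : (ae μ).NeBot := ae_neBot.mpr hμ
    obtain ⟨x, hx⟩ := hγC.exists
    exact (abs_nonneg _).trans hx
  have hγf : MemLp (fun x => γ x * f x) 2 μ := hf.mul' (memLp_top_of_bound hγ C hγC)
  have hγfg : Integrable (fun x => γ x * f x * g x) μ := hγf.integrable_fun_mul hg
  calc ∫ x, γ x * f x * g x ∂μ ≤ ∫ x, C * (|f x| * |g x|) ∂μ := by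
        refine integral_mono_ae hγfg ((hf.abs.integrable_fun_mul hg.abs).const_mul C) ?_
        filter_upwards [hγC] with x hx
        rw [mul_assoc]
        calc γ x * (f x * g x) ≤ |γ x| * |f x * g x| := by
              rw [← abs_mul]; exact le_abs_self _
          _ ≤ C * (|f x| * |g x|) := by
              rw [abs_mul]; exact mul_le_mul_of_nonneg_right hx (by positivity)
    _ ≤ C * (√(∫ x, f x ^ 2 ∂μ) * √(∫ x, g x ^ 2 ∂μ)) := by
        rw [integral_const_mul]
        refine mul_le_mul_of_nonneg_left ?_ hC
        simpa only [Pi.abs_apply, sq_abs] using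
          (le_abs_self _).trans (abs_integral_mul_le_sqrt_mul_sqrt hf.abs hg.abs)
    _ = C * √(∫ x, f x ^ 2 ∂μ) * √(∫ x, g x ^ 2 ∂μ) := (mul_assoc _ _ _).symm

lemma integral_sub_mul_eq_of_integral_mul_eq_zero {P e : α → ℝ} (hf : MemLp f 2 μ)
    (hP : MemLp P 2 μ) (he : MemLp e 2 μ) (h : ∫ x, e x * P x ∂μ = 0) :
    ∫ x, (f x - P x) * e x ∂μ = ∫ x, f x * e x ∂μ := by
  simp_rw [sub_mul]
  rw [integral_sub (hf.integrable_fun_mul he) (hP.integrable_fun_mul he)]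
  simp_rw [mul_comm (P _), h, sub_zero]

theorem integral_mul_mul_sub_integral_mul_mul_le {γ p q Pp Pq Pγp Pγq : α → ℝ} {C : ℝ}
    (hγ : AEStronglyMeasurable γ μ) (hγC : ∀ᵐ x ∂μ, |γ x| ≤ C)
    (hp : MemLp p 2 μ) (hq : MemLp q 2 μ) (hPp : MemLp Pp 2 μ) (hPq : MemLp Pq 2 μ)
    (hPγp : MemLp Pγp 2 μ) (hPγq : MemLp Pγq 2 μ)
    (hp_orth : ∫ x, (p x - Pp x) * Pγq x ∂μ = 0) (hq_orth : ∫ x, (q x - Pq x) * Pγp x ∂μ = 0) :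
    ∫ x, γ x * Pp x * Pq x ∂μ - ∫ x, γ x * p x * q x ∂μ ≤
      √(∫ x, (γ x * p x - Pγp x) ^ 2 ∂μ) * √(∫ x, (q x - Pq x) ^ 2 ∂μ)
        + √(∫ x, (γ x * q x - Pγq x) ^ 2 ∂μ) * √(∫ x, (p x - Pp x) ^ 2 ∂μ)
        + C * √(∫ x, (p x - Pp x) ^ 2 ∂μ) * √(∫ x, (q x - Pq x) ^ 2 ∂μ) := by
  have hγL : ∀ {f : α → ℝ}, MemLp f 2 μ → MemLp (fun x => γ x * f x) 2 μ :=
    fun hf => hf.mul' (memLp_top_of_bound hγ C hγC)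
  have hep : MemLp (fun x => p x - Pp x) 2 μ := hp.sub hPp
  have heq : MemLp (fun x => q x - Pq x) 2 μ := hq.sub hPq
  have hsplit : ∫ x, γ x * Pp x * Pq x ∂μ - ∫ x, γ x * p x * q x ∂μ
      = ∫ x, γ x * (p x - Pp x) * (q x - Pq x) ∂μ - ∫ x, γ x * p x * (q x - Pq x) ∂μ
        - ∫ x, γ x * q x * (p x - Pp x) ∂μ := by
    have hee := (hγL hep).integrable_fun_mul heq
    have hpe := (hγL hp).integrable_fun_mul heq
    have hqe := (hγL hq).integrable_fun_mul hep
    rw [← integral_sub ((hγL hPp).integrable_fun_mul hPq) ((hγL hp).integrable_fun_mul hq),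
      ← integral_sub hee hpe, ← integral_sub (hee.sub hpe : Integrable (fun x => _ - _) μ) hqe]
    exact integral_congr_ae (.of_forall fun x => by ring)
  have hp_term := integral_sub_mul_eq_of_integral_mul_eq_zero (hγL hp) hPγp heq hq_orth
  have hq_term := integral_sub_mul_eq_of_integral_mul_eq_zero (hγL hq) hPγq hep hp_orth
  have hrp : MemLp (fun x => γ x * p x - Pγp x) 2 μ := (hγL hp).sub hPγp
  have hrq : MemLp (fun x => γ x * q x - Pγq x) 2 μ := (hγL hq).sub hPγq
  have hp_bound := abs_integral_mul_le_sqrt_mul_sqrt hrp heq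
  have hq_bound := abs_integral_mul_le_sqrt_mul_sqrt hrq hep
  have he_bound := integral_mul_mul_le_of_abs_le hγ hγC hep heq
  rw [hsplit, ← hp_term, ← hq_term]
  linarith [neg_abs_le (∫ x, (γ x * p x - Pγp x) * (q x - Pq x) ∂μ),
    neg_abs_le (∫ x, (γ x * q x - Pγq x) * (p x - Pp x) ∂μ)]

end MeasureTheory

lemma Continuous.memLp_restrict_of_isBounded {X F : Type*} [PseudoMetricSpace X]
    [ProperSpace X] [MeasurableSpace X] [OpensMeasurableSpace X] {μ : Measure X}
    [IsFiniteMeasureOnCompacts μ] [NormedAddCommGroup F] {f : X → F} (hf : Continuous f)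
    {s : Set X} (hs : Bornology.IsBounded s) (p : ENNReal) : MemLp f p (μ.restrict s) := by
  obtain ⟨C, hC⟩ := hs.isCompact_closure.exists_bound_of_continuousOn hf.continuousOn
  have : IsFiniteMeasure (μ.restrict (closure s)) :=
    isFiniteMeasure_restrict.mpr hs.isCompact_closure.measure_lt_top.ne
  have hmem : MemLp f p (μ.restrict (closure s)) :=
    .of_bound hf.aestronglyMeasurable C (ae_restrict_of_forall_mem isClosed_closure.measurableSet hC)
  exact hmem.mono_measure (Measure.restrict_mono subset_closure le_rfl)

lemma IsPolyDeg.continuous {m : ℕ} {f : Plane → ℝ} (hf : IsPolyDeg m f) : Continuous f := by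
  obtain ⟨P, -, hP⟩ := hf
  rw [funext hP]
  exact P.continuous_eval.comp (continuous_pi fun i => (EuclideanSpace.proj i).continuous)

theorem statement2_general
    (E : Set Plane) (hEbdd : Bornology.IsBounded E)
    (γ : Plane → ℝ) (γmax : ℝ) (hγmeas : Measurable γ)
    (hγbdd : ∀ᵐ x ∂(volume.restrict E), |γ x| ≤ γmax)
    (k : ℕ)
    (p q : Plane → ℝ)
    (hp : MemLp p 2 (volume.restrict E)) (hq : MemLp q 2 (volume.restrict E))
    (Pp Pq Pγp Pγq : Plane → ℝ)
    (hPp : IsL2Proj E (k - 1) p Pp) (hPq : IsL2Proj E (k - 1) q Pq)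
    (hPγp : IsL2Proj E (k - 1) (fun x => γ x * p x) Pγp)
    (hPγq : IsL2Proj E (k - 1) (fun x => γ x * q x) Pγq) :
    (∫ x in E, γ x * Pp x * Pq x) - (∫ x in E, γ x * p x * q x) ≤
      errS E (fun x => γ x * p x) Pγp * errS E q Pq
        + errS E (fun x => γ x * q x) Pγq * errS E p Pp
        + γmax * errS E p Pp * errS E q Pq := by
  have hpoly : ∀ {f : Plane → ℝ}, IsPolyDeg (k - 1) f → MemLp f 2 (volume.restrict E) :=
    fun hf => hf.continuous.memLp_restrict_of_isBounded hEbdd 2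
  exact integral_mul_mul_sub_integral_mul_mul_le hγmeas.aestronglyMeasurable hγbdd hp hq
    (hpoly hPp.1) (hpoly hPq.1) (hpoly hPγp.1) (hpoly hPγq.1) (hPp.2 _ hPγq.1) (hPq.2 _ hPγp.1)

/-- estimate (5.11) of the paper: for the reaction forms
`c(p,q) = ∫_E γ p q` and `c_h(p,q) = ∫_E γ (Π⁰_{k−1} p)(Π⁰_{k−1} q)`,
`c_h(p,q) − c(p,q) ≤ ℰ_{k−1}(γp)ℰ_{k−1}(q) + ℰ_{k−1}(γq)ℰ_{k−1}(p) + γmax ℰ_{k−1}(p)ℰ_{k−1}(q)`. -/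
theorem statement2
    (E : Set Plane) (hEopen : IsOpen E) (hEbdd : Bornology.IsBounded E)
    (hEpos : 0 < volume E)
    (γ : Plane → ℝ) (γmax : ℝ) (hγmeas : Measurable γ)
    (hγbdd : ∀ᵐ x ∂(volume.restrict E), |γ x| ≤ γmax)
    (k : ℕ) (hk : 1 ≤ k)
    (p q : Plane → ℝ)
    (hp : MemLp p 2 (volume.restrict E)) (hq : MemLp q 2 (volume.restrict E))
    (Pp Pq Pγp Pγq : Plane → ℝ)
    (hPp : IsL2Proj E (k - 1) p Pp) (hPq : IsL2Proj E (k - 1) q Pq)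
    (hPγp : IsL2Proj E (k - 1) (fun x => γ x * p x) Pγp)
    (hPγq : IsL2Proj E (k - 1) (fun x => γ x * q x) Pγq) :
    (∫ x in E, γ x * Pp x * Pq x) - (∫ x in E, γ x * p x * q x) ≤
      errS E (fun x => γ x * p x) Pγp * errS E q Pq
        + errS E (fun x => γ x * q x) Pγq * errS E p Pp
        + γmax * errS E p Pp * errS E q Pq :=
  statement2_general E hEbdd γ γmax hγmeas hγbdd k p q hp hq Pp Pq Pγp Pγq hPp hPq hPγp hPγq
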